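/- The Bergman distance on the Siegel upper half-space U is given explicitly by δ_U(z,w) = tanh⁻¹ √(1 - ρ(z)ρ(w)/|ρ(z,w)|²) for all z, w ∈ U. In particular, 0 ≤ ρ(z)ρ(w) ≤ |ρ(z,w)|² for all z, w ∈ U. -/

import Mathlib

/-!
Under the inverse Cayley transform `Φ⁻¹ : U → B`, one has `1 - |Φ⁻¹ z|² = 4 ρ(z) / |i + z_n|²`
and `1 - ⟨Φ⁻¹ w, Φ⁻¹ z⟩ = 4 conj ρ(z,w) / ((i + w_n) conj (i + z_n))`. Inserted into Rudin's
identity `1 - |φ_η(ξ)|² = (1 - |η|²)(1 - |ξ|²) / |1 - ⟨ξ, η⟩|²`, valid in every complex inner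
product space, all the denominators cancel: `1 - |φ_{Φ⁻¹ z}(Φ⁻¹ w)|² = ρ(z)ρ(w) / |ρ(z,w)|²`.
The inequality `ρ(z)ρ(w) ≤ |ρ(z,w)|²` is `|φ_{Φ⁻¹ z}(Φ⁻¹ w)|² ≥ 0`.
-/

open MeasureTheory Real Complex

noncomputable section

/-- `ℂ^n` split as `(z', z_n)` with `z' ∈ ℂ^{n-1}` (here `m = n - 1`). -/
abbrev Cn (m : ℕ) := (Fin m → ℂ) × ℂ

/-- `|z'|² = ∑ |z_j|²` for `z' ∈ ℂ^{n-1}`. -/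
def nsq1 {m : ℕ} (z' : Fin m → ℂ) : ℝ := ∑ j, ‖z' j‖ ^ 2

/-- `⟨z', w'⟩ = ∑_{j<n} z_j conj w_j`. -/
def herm1 {m : ℕ} (z' w' : Fin m → ℂ) : ℂ := ∑ j, z' j * (starRingEnd ℂ) (w' j)

/-- Full Hermitian pairing `⟨z, w⟩` on `ℂ^n`. -/
def hermP {m : ℕ} (ξ η : Cn m) : ℂ := herm1 ξ.1 η.1 + ξ.2 * (starRingEnd ℂ) η.2

/-- `|z|²` on `ℂ^n`. -/
def nsqP {m : ℕ} (ξ : Cn m) : ℝ := nsq1 ξ.1 + ‖ξ.2‖ ^ 2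

/-- `ρ(z,w) = (i/2)(conj w_n - z_n) - ⟨z', w'⟩`. -/
def rhoK {m : ℕ} (z w : Cn m) : ℂ :=
  Complex.I / 2 * ((starRingEnd ℂ) w.2 - z.2) - herm1 z.1 w.1

/-- `ρ(z) = Im z_n - |z'|²`. -/
def rho {m : ℕ} (z : Cn m) : ℝ := z.2.im - nsq1 z.1

/-- The Siegel upper half-space `U ⊂ ℂ^n`. -/
def Siegel (m : ℕ) : Set (Cn m) := {z | nsq1 z.1 < z.2.im}

/-- The open unit ball of `ℂ^n`. -/
def Ball (m : ℕ) : Set (Cn m) := {ξ | nsqP ξ < 1}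

/-- The Cayley transform `Φ : B^n → U`. -/
def cayley {m : ℕ} (ξ : Cn m) : Cn m :=
  ((1 + ξ.2)⁻¹ • ξ.1, Complex.I * ((1 - ξ.2) / (1 + ξ.2)))

/-- The inverse hyperbolic tangent `tanh⁻¹`. -/
def artanh (x : ℝ) : ℝ := Real.log ((1 + x) / (1 - x)) / 2

/-- The inverse Cayley transform `Φ⁻¹ : U → B^n`. -/
def invCayley {m : ℕ} (u : Cn m) : Cn m :=
  ((2 * Complex.I / (Complex.I + u.2)) • u.1, (Complex.I - u.2) / (Complex.I + u.2))

/-- Orthogonal projection onto the span of `η` (with `P_0 = 0`). -/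
def PprojP {m : ℕ} (η ξ : Cn m) : Cn m :=
  if η = 0 then 0 else (hermP ξ η / hermP η η) • η

/-- The Möbius transformation `φ_η` of the unit ball of `ℂ^n`. -/
def moebiusP {m : ℕ} (η ξ : Cn m) : Cn m :=
  (1 - hermP ξ η)⁻¹ •
    (η - PprojP η ξ - ((Real.sqrt (1 - nsqP η) : ℝ) : ℂ) • (ξ - PprojP η ξ))

/-- The Bergman distance on the Siegel upper half-space, defined via the Cayley transform
and the unit-ball formula `δ_U(z,w) = tanh⁻¹ |φ_{Φ⁻¹(z)}(Φ⁻¹(w))|`. -/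
def bergmanDist {m : ℕ} (z w : Cn m) : ℝ :=
  _root_.artanh (Real.sqrt (nsqP (moebiusP (invCayley z) (invCayley w))))

open scoped InnerProductSpace ComplexConjugate

section Moebius

variable {E : Type*} [NormedAddCommGroup E] [InnerProductSpace ℂ E]

def moebius (η ξ : E) : E :=
  (1 - ⟪η, ξ⟫_ℂ)⁻¹ • (η - (ℂ ∙ η).starProjection ξ
    - ((√(1 - ‖η‖ ^ 2) : ℝ) : ℂ) • (ξ - (ℂ ∙ η).starProjection ξ))

theorem norm_sq_moebius_numerator (η ξ : E) (hη : ‖η‖ ≤ 1) :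
    ‖η - (ℂ ∙ η).starProjection ξ
      - ((√(1 - ‖η‖ ^ 2) : ℝ) : ℂ) • (ξ - (ℂ ∙ η).starProjection ξ)‖ ^ 2
      = ‖1 - ⟪η, ξ⟫_ℂ‖ ^ 2 - (1 - ‖η‖ ^ 2) * (1 - ‖ξ‖ ^ 2) := by
  rw [Submodule.starProjection_singleton, RCLike.ofReal_eq_complex_ofReal]
  rcases eq_or_ne η 0 with rfl | hη0
  · simp
  set s : ℂ := ((√(1 - ‖η‖ ^ 2) : ℝ) : ℂ)
  have hs : s ^ 2 = 1 - (‖η‖ : ℂ) ^ 2 := by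
    rw [← Complex.ofReal_pow, Real.sq_sqrt (by nlinarith [norm_nonneg η])]; push_cast; ring
  have hs_conj : conj s = s := Complex.conj_ofReal _
  have he : (‖η‖ : ℂ) ≠ 0 := by simpa using hη0
  have norm_sq (x : E) : (‖x‖ : ℂ) ^ 2 = ⟪x, x⟫_ℂ := by
    rw [inner_self_eq_norm_sq_to_K, RCLike.ofReal_eq_complex_ofReal]
  apply Complex.ofReal_injective
  push_cast
  rw [norm_sq (_ - s • _), ← Complex.mul_conj']
  simp only [inner_sub_left, inner_sub_right, inner_smul_left, inner_smul_right]
  simp only [← norm_sq, ← inner_conj_symm ξ η, hs_conj, map_div₀, map_pow,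
    Complex.conj_ofReal, map_sub, map_one]
  field_simp
  linear_combination ((‖η‖ : ℂ) ^ 2 * (‖ξ‖ : ℂ) ^ 2 - conj ⟪η, ξ⟫_ℂ * ⟪η, ξ⟫_ℂ) * hs

theorem one_sub_norm_sq_moebius (η ξ : E) (hη : ‖η‖ ≤ 1) (hc : ⟪η, ξ⟫_ℂ ≠ 1) :
    1 - ‖moebius η ξ‖ ^ 2 = (1 - ‖η‖ ^ 2) * (1 - ‖ξ‖ ^ 2) / ‖1 - ⟪η, ξ⟫_ℂ‖ ^ 2 := by
  have : ‖1 - ⟪η, ξ⟫_ℂ‖ ≠ 0 := norm_ne_zero_iff.mpr (sub_ne_zero.mpr hc.symm)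
  rw [moebius, norm_smul, mul_pow, norm_sq_moebius_numerator η ξ hη, norm_inv]
  field_simp
  ring

theorem inner_ne_one_of_norm_lt_one {η ξ : E} (hη : ‖η‖ < 1) (hξ : ‖ξ‖ < 1) : ⟪η, ξ⟫_ℂ ≠ 1 := by
  intro h
  have := norm_inner_le_norm (𝕜 := ℂ) η ξ
  rw [h, norm_one] at this
  nlinarith [norm_nonneg η, norm_nonneg ξ]

end Moebius

-- `hermP ξ η` is linear in `ξ`, so it is `⟪toL2 m η, toL2 m ξ⟫_ℂ` in Mathlib's convention.
@[simps]
def toL2 (m : ℕ) : Cn m →ₗ[ℂ] WithLp 2 (EuclideanSpace ℂ (Fin m) × ℂ) where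
  toFun ξ := WithLp.toLp 2 (WithLp.toLp 2 ξ.1, ξ.2)
  map_add' _ _ := rfl
  map_smul' _ _ := rfl

theorem inner_toL2 {m : ℕ} (ξ η : Cn m) : ⟪toL2 m η, toL2 m ξ⟫_ℂ = hermP ξ η := by
  simp [WithLp.prod_inner_apply, PiLp.inner_apply, hermP, herm1]

theorem norm_toL2_sq {m : ℕ} (ξ : Cn m) : ‖toL2 m ξ‖ ^ 2 = nsqP ξ := by
  rw [WithLp.prod_norm_sq_eq_of_L2, EuclideanSpace.norm_sq_eq]
  rfl

theorem toL2_moebiusP {m : ℕ} (η ξ : Cn m) :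
    toL2 m (moebiusP η ξ) = moebius (toL2 m η) (toL2 m ξ) := by
  have hP : toL2 m (PprojP η ξ) = (ℂ ∙ toL2 m η).starProjection (toL2 m ξ) := by
    rw [Submodule.starProjection_singleton, PprojP]
    split_ifs with h
    · simp [h]
    · rw [map_smul, inner_toL2, ← inner_toL2 η η, inner_self_eq_norm_sq_to_K]
      push_cast
      rfl
  simp only [moebiusP, moebius, map_smul, map_sub, hP, inner_toL2, norm_toL2_sq]

theorem nsqP_nonneg {m : ℕ} (ξ : Cn m) : 0 ≤ nsqP ξ := by
  rw [← norm_toL2_sq]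
  positivity

theorem norm_toL2_lt_one {m : ℕ} {ξ : Cn m} (hξ : nsqP ξ < 1) : ‖toL2 m ξ‖ < 1 := by
  rwa [← sq_lt_one_iff₀ (norm_nonneg _), norm_toL2_sq]

theorem hermP_ne_one {m : ℕ} {η ξ : Cn m} (hη : nsqP η < 1) (hξ : nsqP ξ < 1) :
    hermP ξ η ≠ 1 := by
  rw [← inner_toL2]
  exact inner_ne_one_of_norm_lt_one (norm_toL2_lt_one hη) (norm_toL2_lt_one hξ)

theorem one_sub_nsqP_moebiusP {m : ℕ} {η ξ : Cn m} (hη : nsqP η < 1) (hξ : nsqP ξ < 1) :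
    1 - nsqP (moebiusP η ξ) = (1 - nsqP η) * (1 - nsqP ξ) / ‖1 - hermP ξ η‖ ^ 2 := by
  have h := one_sub_norm_sq_moebius (toL2 m η) (toL2 m ξ) (norm_toL2_lt_one hη).le
    (by rw [inner_toL2]; exact hermP_ne_one hη hξ)
  rwa [← toL2_moebiusP, inner_toL2, norm_toL2_sq, norm_toL2_sq, norm_toL2_sq] at h

theorem nsq1_nonneg {m : ℕ} (x : Fin m → ℂ) : 0 ≤ nsq1 x :=
  Finset.sum_nonneg fun _ _ => sq_nonneg _

theorem nsq1_smul {m : ℕ} (a : ℂ) (x : Fin m → ℂ) : nsq1 (a • x) = ‖a‖ ^ 2 * nsq1 x := by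
  simp only [nsq1, Pi.smul_apply, smul_eq_mul, norm_mul, mul_pow, Finset.mul_sum]

theorem herm1_conj {m : ℕ} (x y : Fin m → ℂ) : conj (herm1 x y) = herm1 y x := by
  simp only [herm1, map_sum, map_mul, Complex.conj_conj]
  exact Finset.sum_congr rfl fun j _ => mul_comm _ _

theorem herm1_smul_smul {m : ℕ} (a b : ℂ) (x y : Fin m → ℂ) :
    herm1 (a • x) (b • y) = a * conj b * herm1 x y := by
  simp only [herm1, Pi.smul_apply, smul_eq_mul, map_mul, Finset.mul_sum]
  exact Finset.sum_congr rfl fun j _ => by ring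

theorem rho_pos_of_mem_Siegel {m : ℕ} {z : Cn m} (hz : z ∈ Siegel m) : 0 < rho z :=
  sub_pos.mpr hz

theorem I_add_snd_ne_zero_of_mem_Siegel {m : ℕ} {z : Cn m} (hz : z ∈ Siegel m) :
    I + z.2 ≠ 0 := by
  have hpos : 0 < (I + z.2).im := by
    simp only [add_im, I_im]
    linarith [nsq1_nonneg z.1, show nsq1 z.1 < z.2.im from hz]
  exact fun h => hpos.ne' (by rw [h, zero_im])

theorem one_sub_nsqP_invCayley {m : ℕ} {z : Cn m} (hz : I + z.2 ≠ 0) :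
    1 - nsqP (invCayley z) = 4 * rho z / ‖I + z.2‖ ^ 2 := by
  have h0 : ‖I + z.2‖ ^ 2 ≠ 0 := pow_ne_zero _ (norm_ne_zero_iff.mpr hz)
  have hplus : ‖I + z.2‖ ^ 2 = z.2.re ^ 2 + (1 + z.2.im) ^ 2 := by
    rw [Complex.sq_norm, normSq_apply]; simp; ring
  have hminus : ‖I - z.2‖ ^ 2 = z.2.re ^ 2 + (1 - z.2.im) ^ 2 := by
    rw [Complex.sq_norm, normSq_apply]; simp; ring
  simp only [invCayley, nsqP, rho, nsq1_smul, norm_div, norm_mul, norm_I, Complex.norm_ofNat,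
    div_pow, mul_pow]
  field_simp
  rw [hplus, hminus]
  ring

theorem one_sub_hermP_invCayley {m : ℕ} {z w : Cn m} (hz : I + z.2 ≠ 0) (hw : I + w.2 ≠ 0) :
    1 - hermP (invCayley w) (invCayley z)
      = 4 * conj (rhoK z w) / ((I + w.2) * conj (I + z.2)) := by
  have hz' : -I + conj z.2 ≠ 0 := by
    simpa only [map_add, conj_I] using (map_ne_zero (starRingEnd ℂ)).mpr hz
  simp only [invCayley, hermP, rhoK, herm1_smul_smul, map_sub, map_mul, map_div₀, map_add,
    conj_I, conj_conj, herm1_conj, map_ofNat]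
  field_simp
  ring_nf
  simp only [I_sq]
  ring

theorem nsqP_invCayley_lt_one {m : ℕ} {z : Cn m} (hz : z ∈ Siegel m) :
    nsqP (invCayley z) < 1 := by
  have hρ := rho_pos_of_mem_Siegel hz
  have hI := I_add_snd_ne_zero_of_mem_Siegel hz
  have hpos : 0 < 4 * rho z / ‖I + z.2‖ ^ 2 := by positivity
  linarith [one_sub_nsqP_invCayley hI]

theorem rhoK_ne_zero {m : ℕ} {z w : Cn m} (hz : z ∈ Siegel m) (hw : w ∈ Siegel m) :
    rhoK z w ≠ 0 := by
  intro h
  apply hermP_ne_one (nsqP_invCayley_lt_one hz) (nsqP_invCayley_lt_one hw)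
  have h1 := one_sub_hermP_invCayley (I_add_snd_ne_zero_of_mem_Siegel hz)
    (I_add_snd_ne_zero_of_mem_Siegel hw)
  rw [h, map_zero, mul_zero, zero_div, sub_eq_zero] at h1
  exact h1.symm

theorem one_sub_nsqP_moebiusP_invCayley {m : ℕ} {z w : Cn m} (hz : z ∈ Siegel m)
    (hw : w ∈ Siegel m) :
    1 - nsqP (moebiusP (invCayley z) (invCayley w)) = rho z * rho w / ‖rhoK z w‖ ^ 2 := by
  have hz' := I_add_snd_ne_zero_of_mem_Siegel hz
  have hw' := I_add_snd_ne_zero_of_mem_Siegel hw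
  have hK := rhoK_ne_zero hz hw
  rw [one_sub_nsqP_moebiusP (nsqP_invCayley_lt_one hz) (nsqP_invCayley_lt_one hw),
    one_sub_nsqP_invCayley hz', one_sub_nsqP_invCayley hw', one_sub_hermP_invCayley hz' hw']
  simp only [norm_div, norm_mul, Complex.norm_conj, Complex.norm_ofNat]
  field_simp

theorem bergmanDist_formula (m : ℕ) (z w : Cn m) (hz : z ∈ Siegel m) (hw : w ∈ Siegel m) :
    bergmanDist z w = _root_.artanh (Real.sqrt (1 - rho z * rho w / ‖rhoK z w‖ ^ 2)) ∧
      0 ≤ rho z * rho w ∧ rho z * rho w ≤ ‖rhoK z w‖ ^ 2 := by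
  have key := one_sub_nsqP_moebiusP_invCayley hz hw
  have hK : 0 < ‖rhoK z w‖ ^ 2 := by
    have := rhoK_ne_zero hz hw
    positivity
  have hρ := mul_pos (rho_pos_of_mem_Siegel hz) (rho_pos_of_mem_Siegel hw)
  refine ⟨by rw [bergmanDist, ← key, sub_sub_cancel], hρ.le, ?_⟩
  rw [← div_le_one hK, ← key]
  linarith [nsqP_nonneg (moebiusP (invCayley z) (invCayley w))]
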